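/- Let T ∈ ℕ and for t, s ∈ {0,…,T} let ρ_t, c_t, w^p_t, w^c_t ∈ ℝ^L, and set ρ*_t = ρ_t − w^p_t and c*_t = c_t − w^c_t. Let ξ_{t,s} ∈ ℝ and define the slackness ε*_{t,s} = ξ_{t,s} − ρ*_tᵀ(c*_t − c*_s). Define α^p = max_t ‖w^p_t‖, α^c = max_t ‖w^c_t‖, β^p = max_t ‖ρ_t‖, and β^c = max_t ‖c_t‖ (Euclidean norms). If ε*_{t,s} ≥ 6 max{α^p β^c, α^c β^p, α^p α^c} for all t, s ∈ {0,…,T}, then ξ_{t,s} ≥ ρ_tᵀ(c_t − c_s) for all t, s ∈ {0,…,T}. -/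

import Mathlib

open MeasureTheory Filter Topology Finset

noncomputable section

/-- Vectors in ℝ^L with the Euclidean norm. -/
abbrev Vec (L : ℕ) := EuclideanSpace ℝ (Fin L)

/-- Inner product (dot product) of two vectors. -/
def dotp {L : ℕ} (p c : Vec L) : ℝ := ∑ j, p j * c j

/-- Componentwise nonnegative vectors: the set ℝ^L_+. -/
def NonnegV {L : ℕ} (c : Vec L) : Prop := ∀ j, 0 ≤ c j

/-- The consumption space ℝ^L_+ \ {0}. -/
def ConsV {L : ℕ} (c : Vec L) : Prop := NonnegV c ∧ c ≠ 0

/-- Componentwise strictly positive vectors: the set ℝ^L_{++}. -/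
def PosV {L : ℕ} (p : Vec L) : Prop := ∀ j, 0 < p j

/-- Concavity of u on its domain ℝ^L_+. -/
def IsConcaveNN {L : ℕ} (u : Vec L → ℝ) : Prop :=
  ∀ c c' : Vec L, NonnegV c → NonnegV c' → ∀ a : ℝ, 0 ≤ a → a ≤ 1 →
    a * u c + (1 - a) * u c' ≤ u (a • c + (1 - a) • c')

/-- Local nonsatiation of u on its domain ℝ^L_+. -/
def LocallyNonsatiatedNN {L : ℕ} (u : Vec L → ℝ) : Prop :=
  ∀ c : Vec L, NonnegV c → ∀ ε : ℝ, 0 < ε →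
    ∃ c' : Vec L, NonnegV c' ∧ ‖c' - c‖ < ε ∧ u c < u c'

/-- Continuity of u on its domain ℝ^L_+. -/
def ContinuousNN {L : ℕ} (u : Vec L → ℝ) : Prop := ContinuousOn u {c | NonnegV c}

/-- A concave, locally nonsatiated, continuous utility function on ℝ^L_+. -/
def NiceUtility {L : ℕ} (u : Vec L → ℝ) : Prop :=
  IsConcaveNN u ∧ LocallyNonsatiatedNN u ∧ ContinuousNN u

/-- ξ is a supergradient of u at c: u(c') − u(c) ≤ ξᵀ(c'−c) for all c' ∈ ℝ^L_+ \ {0}. -/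
def Supergrad {L : ℕ} (u : Vec L → ℝ) (c ξ : Vec L) : Prop :=
  ∀ c' : Vec L, ConsV c' → u c' - u c ≤ dotp ξ (c' - c)

/-! The observed and the true revealed-preference gaps differ by
`⟪ρ_t, w^c_t - w^c_s⟫ + ⟪w^p_t, c_t - c_s⟫ - ⟪w^p_t, w^c_t - w^c_s⟫`. By Cauchy–Schwarz these six
inner products sum to at most `2 (β^p α^c + α^p β^c + α^p α^c) ≤ 6 max {α^p β^c, α^c β^p, α^p α^c}`,
which the slack absorbs. -/

theorem dotp_eq_inner {L : ℕ} (p q : Vec L) : dotp p q = inner ℝ p q := by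
  simp [dotp, PiLp.inner_apply, RCLike.inner_apply, mul_comm]

section InnerPerturbation

variable {E : Type*} [NormedAddCommGroup E] [InnerProductSpace ℝ E]

theorem abs_real_inner_le_of_norm_le {x y : E} {a b : ℝ} (hx : ‖x‖ ≤ a) (hy : ‖y‖ ≤ b) :
    |inner ℝ x y| ≤ a * b :=
  (abs_real_inner_le_norm x y).trans
    (mul_le_mul hx hy (norm_nonneg y) ((norm_nonneg x).trans hx))

theorem real_inner_sub_le_inner_perturbed {ρ w c c' v v' : E} {αp αc βp βc : ℝ}
    (hw : ‖w‖ ≤ αp) (hv : ‖v‖ ≤ αc) (hv' : ‖v'‖ ≤ αc) (hρ : ‖ρ‖ ≤ βp)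
    (hc : ‖c‖ ≤ βc) (hc' : ‖c'‖ ≤ βc) :
    inner ℝ ρ (c - c') ≤ inner ℝ (ρ - w) ((c - v) - (c' - v'))
      + 2 * (βp * αc) + 2 * (αp * βc) + 2 * (αp * αc) := by
  have hexpand : inner ℝ ρ (c - c') - inner ℝ (ρ - w) ((c - v) - (c' - v')) =
      inner ℝ ρ v - inner ℝ ρ v' + inner ℝ w c - inner ℝ w c'
        - inner ℝ w v + inner ℝ w v' := by
    simp only [inner_sub_left, inner_sub_right]
    ring
  have h₁ := abs_le.mp (abs_real_inner_le_of_norm_le hρ hv)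
  have h₂ := abs_le.mp (abs_real_inner_le_of_norm_le hρ hv')
  have h₃ := abs_le.mp (abs_real_inner_le_of_norm_le hw hc)
  have h₄ := abs_le.mp (abs_real_inner_le_of_norm_le hw hc')
  have h₅ := abs_le.mp (abs_real_inner_le_of_norm_le hw hv)
  have h₆ := abs_le.mp (abs_real_inner_le_of_norm_le hw hv')
  linarith [h₁.2, h₂.1, h₃.2, h₄.1, h₅.1, h₆.2]

end InnerPerturbation

theorem norm_le_ciSup {ι E : Type*} [Finite ι] [Norm E] (f : ι → E) (i : ι) :
    ‖f i‖ ≤ ⨆ j, ‖f j‖ :=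
  le_ciSup (Set.finite_range fun j => ‖f j‖).bddAbove i

/-- robustness to local measurement error: with observed prices ρ_t and
consumptions c_t, measurement errors w^p_t and w^c_t, true prices ρ*_t = ρ_t − w^p_t and
true consumptions c*_t = c_t − w^c_t, slackness ε*_{t,s} = ξ_{t,s} − ρ*_tᵀ(c*_t − c*_s),
and α^p = max_t ‖w^p_t‖, α^c = max_t ‖w^c_t‖, β^p = max_t ‖ρ_t‖, β^c = max_t ‖c_t‖
(Euclidean norms): if ε*_{t,s} ≥ 6 max{α^p β^c, α^c β^p, α^p α^c} for all t, s, then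
ξ_{t,s} ≥ ρ_tᵀ(c_t − c_s) for all t, s. -/
theorem stmt_16 {L T : ℕ} (ρ c wp wc : Fin (T + 1) → Vec L)
    (ξ : Fin (T + 1) → Fin (T + 1) → ℝ)
    (hslack : ∀ t s,
        ξ t s - dotp (ρ t - wp t) ((c t - wc t) - (c s - wc s)) ≥
          6 * max (max ((⨆ t', ‖wp t'‖) * (⨆ t', ‖c t'‖)) ((⨆ t', ‖wc t'‖) * (⨆ t', ‖ρ t'‖)))
              ((⨆ t', ‖wp t'‖) * (⨆ t', ‖wc t'‖))) :
    ∀ t s, ξ t s ≥ dotp (ρ t) (c t - c s) := by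
  intro t s
  have hperturb := real_inner_sub_le_inner_perturbed (norm_le_ciSup wp t)
    (norm_le_ciSup wc t) (norm_le_ciSup wc s) (norm_le_ciSup ρ t)
    (norm_le_ciSup c t) (norm_le_ciSup c s)
  have hslack_ts := hslack t s
  rw [dotp_eq_inner] at hslack_ts ⊢
  set M := max (max ((⨆ t', ‖wp t'‖) * (⨆ t', ‖c t'‖)) ((⨆ t', ‖wc t'‖) * (⨆ t', ‖ρ t'‖)))
    ((⨆ t', ‖wp t'‖) * (⨆ t', ‖wc t'‖))
  have hM₁ : (⨆ t', ‖wp t'‖) * (⨆ t', ‖c t'‖) ≤ M := le_max_of_le_left (le_max_left _ _)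
  have hM₂ : (⨆ t', ‖ρ t'‖) * (⨆ t', ‖wc t'‖) ≤ M :=
    mul_comm (⨆ t', ‖ρ t'‖) _ ▸ le_max_of_le_left (le_max_right _ _)
  have hM₃ : (⨆ t', ‖wp t'‖) * (⨆ t', ‖wc t'‖) ≤ M := le_max_right _ _
  linarith

end
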